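/- Let x* be a feasible point of (NSDP), let s = dim Ker(g(x*)), and suppose 𝒰 : N_M → ℝ^{m×s} is a continuous map on a neighborhood N_M of g(x*) in S^m such that the columns of 𝒰(g(x*)) form an orthonormal basis of Ker(g(x*)) and, for every M ∈ N_M, the columns of 𝒰(M) are orthonormal and span the invariant subspace of M associated with its s smallest eigenvalues. For x with g(x) ∈ N_M define S(x,x*) = {d ∈ ℝⁿ : 𝒰(g(x))ᵀ Dg(x)[d] 𝒰(g(x)) = 0 and Dh(x)d = 0}, and let ū₁(x),…,ū_s(x) be the columns of 𝒰(g(x)) and v̄_{ij}(x) = (ū_i(x)ᵀ ∂₁g(x) ū_j(x), …, ū_i(x)ᵀ ∂ₙg(x) ū_j(x)) ∈ ℝⁿ. Then the weak constant rank property holds at x* — i.e. there is a neighborhood N of x* on which the dimension of the span of {v̄_{ij}(x) : 1 ≤ i ≤ j ≤ s} ∪ {∇h_i(x) : i = 1,…,p} is the same for all x ∈ N — if and only if the set-valued map x ↦ S(x,x*) is inner semicontinuous at x*, meaning that for every d ∈ S(x*,x*) and every sequence xᵏ → x* there exist dᵏ → d with dᵏ ∈ S(xᵏ,x*) for all k.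 -/

import Mathlib

/-!
`S(x, x*)` is the orthogonal complement of the span of the vectors `v̄ᵢⱼ(x)` (`i ≤ j`) and
`∇hᵢ(x)`: the matrix `𝒰ᵀ Dg(x)[d] 𝒰` is symmetric, so its upper triangle determines it. These
vectors depend continuously on `x`, and for any family `V(x)` continuous at `x*` in a
finite-dimensional space, the rank of `V(x)` is locally constant iff `x ↦ V(x)ᗮ` is inner
semicontinuous at `x*`. The rank is always lower semicontinuous, since an independent subfamily
stays independent. If it is locally constant, such a subfamily keeps spanning, and subtracting
from `d ⊥ V(x*)` its Gram-matrix projection onto that subfamily gives `d(x) ∈ V(x)ᗮ` with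
`d(x) → d`. Conversely, inner semicontinuity approximates a basis of `V(x*)ᗮ` inside `V(x)ᗮ` by
families that stay independent, so `dim V(x)ᗮ` is lower semicontinuous as well.
-/

open Filter Topology Set Matrix
open scoped InnerProductSpace

attribute [local instance]
  Matrix.frobeniusSeminormedAddCommGroup Matrix.frobeniusNormedAddCommGroup
  Matrix.frobeniusNormedSpace

def euclOf {n : ℕ} (v : Fin n → ℝ) : EuclideanSpace ℝ (Fin n) := WithLp.toLp 2 v

/-- The perturbed critical subspace
`S(x, x*) = {d : 𝒰(g(x))ᵀ Dg(x)[d] 𝒰(g(x)) = 0, Dh(x)d = 0}`. -/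
def Ssdp {n p m s : ℕ}
    (g : EuclideanSpace ℝ (Fin n) → Matrix (Fin m) (Fin m) ℝ)
    (h : EuclideanSpace ℝ (Fin n) → EuclideanSpace ℝ (Fin p))
    (𝒰 : Matrix (Fin m) (Fin m) ℝ → Matrix (Fin m) (Fin s) ℝ)
    (x : EuclideanSpace ℝ (Fin n)) : Set (EuclideanSpace ℝ (Fin n)) :=
  {d | (𝒰 (g x))ᵀ * fderiv ℝ g x d * 𝒰 (g x) = 0 ∧ fderiv ℝ h x d = 0}

section InnerSemicontinuity

variable {X E : Type*} [TopologicalSpace X]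

def SeqInnerSemicontinuousAt [TopologicalSpace E] (S : X → Set E) (x₀ : X) : Prop :=
  ∀ d ∈ S x₀, ∀ xk : ℕ → X, Tendsto xk atTop (𝓝 x₀) →
    ∃ dk : ℕ → E, Tendsto dk atTop (𝓝 d) ∧ ∀ k, dk k ∈ S (xk k)

lemma seqInnerSemicontinuousAt_of_exists_tendsto [AddCommGroup E] [Module ℝ E]
    [TopologicalSpace E] {K : X → Submodule ℝ E} {x₀ : X}
    (hK : ∀ d ∈ K x₀, ∃ D : X → E, Tendsto D (𝓝 x₀) (𝓝 d) ∧ ∀ᶠ x in 𝓝 x₀, D x ∈ K x) :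
    SeqInnerSemicontinuousAt (fun x => (K x : Set E)) x₀ := by
  classical
  intro d hd xk hxk
  obtain ⟨D, hD, hDK⟩ := hK d hd
  refine ⟨fun k => if D (xk k) ∈ K (xk k) then D (xk k) else 0, ?_, fun k => ?_⟩
  · exact (hD.comp hxk).congr' ((hxk.eventually hDK).mono fun k hk => (if_pos hk).symm)
  · dsimp only
    split_ifs with hk
    exacts [hk, (K (xk k)).zero_mem]

lemma SeqInnerSemicontinuousAt.eventually_finrank_le [FirstCountableTopology X]
    [NormedAddCommGroup E] [NormedSpace ℝ E] [FiniteDimensional ℝ E]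
    {K : X → Submodule ℝ E} {x₀ : X} (hK : SeqInnerSemicontinuousAt (fun x => (K x : Set E)) x₀) :
    ∀ᶠ x in 𝓝 x₀, Module.finrank ℝ (K x₀) ≤ Module.finrank ℝ (K x) := by
  by_contra hfreq
  obtain ⟨xk, hxk, hlt⟩ := exists_seq_forall_of_frequently (not_eventually.mp hfreq)
  let b := Module.finBasis ℝ (K x₀)
  choose Dk hDk hDkK using fun i => hK (b i) (b i).2 xk hxk
  have hb : LinearIndependent ℝ fun i => (b i : E) :=
    b.linearIndependent.map' _ (Submodule.ker_subtype _)
  -- A basis of `K x₀` stays linearly independent under small perturbations.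
  obtain ⟨k, hk⟩ := ((tendsto_pi_nhds.mpr hDk).eventually hb.eventually).exists
  have hkK : LinearIndependent ℝ fun i => (⟨Dk i k, hDkK i k⟩ : K (xk k)) :=
    LinearIndependent.of_comp (K (xk k)).subtype hk
  exact hlt k (by simpa using hkK.fintype_card_le_finrank)

end InnerSemicontinuity

section OrthogonalComplementOfSpan

variable {X E ι : Type*} [TopologicalSpace X] [NormedAddCommGroup E] [InnerProductSpace ℝ E]

lemma mem_orthogonal_span_range_iff (v : ι → E) (d : E) :
    d ∈ (Submodule.span ℝ (range v))ᗮ ↔ ∀ i, ⟪v i, d⟫_ℝ = 0 := by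
  refine ⟨fun hd i => hd _ (Submodule.subset_span (mem_range_self i)), fun hd u hu => ?_⟩
  induction hu using Submodule.span_induction with
  | mem u hu => obtain ⟨i, rfl⟩ := hu; exact hd i
  | zero => exact inner_zero_left d
  | add u w _ _ hu hw => rw [inner_add_left, hu, hw, add_zero]
  | smul a u _ hu => rw [real_inner_smul_left, hu, mul_zero]

lemma gram_mulVec_apply [Fintype ι] (v : ι → E) (c : ι → ℝ) (j : ι) :
    (gram ℝ v *ᵥ c) j = ⟪v j, ∑ i, c i • v i⟫_ℝ := by
  simp [mulVec, dotProduct, inner_sum, real_inner_smul_right, mul_comm]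

/-- The witness is `d - ∑ cᵢ(x) wᵢ(x)` with `G(x) c(x) = (⟪wᵢ(x), d⟫)ᵢ`, `G` the Gram matrix;
`c(x₀) = 0` because `d ⊥ w(x₀)`. -/
lemma exists_tendsto_forall_inner_eq_zero [Fintype ι] {w : X → ι → E} {x₀ : X}
    (hw : ContinuousAt w x₀) (hind : LinearIndependent ℝ (w x₀)) {d : E}
    (hd : ∀ i, ⟪w x₀ i, d⟫_ℝ = 0) :
    ∃ D : X → E, Tendsto D (𝓝 x₀) (𝓝 d) ∧ ∀ᶠ x in 𝓝 x₀, ∀ i, ⟪w x i, D x⟫_ℝ = 0 := by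
  classical
  have hwi (i : ι) : ContinuousAt (fun x => w x i) x₀ := (continuous_apply i).continuousAt.comp hw
  set G := fun x => gram ℝ (w x)
  set b : X → ι → ℝ := fun x i => ⟪w x i, d⟫_ℝ
  set c := fun x => (G x)⁻¹ *ᵥ b x
  have hG : ContinuousAt G x₀ :=
    continuousAt_pi.mpr fun i => continuousAt_pi.mpr fun j => (hwi i).inner (hwi j)
  have hdet : (G x₀).det ≠ 0 := det_gram_ne_zero_iff_linearIndependent.mpr hind
  have hGinv : ContinuousAt (fun x => (G x)⁻¹) x₀ := by
    refine (continuousAt_matrix_inv _ ?_).comp hG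
    rw [Ring.inverse_eq_inv']
    exact continuousAt_inv₀ hdet
  have hb : ContinuousAt b x₀ := continuousAt_pi.mpr fun i => (hwi i).inner continuousAt_const
  have hc : ContinuousAt c x₀ :=
    (continuous_fst.matrix_mulVec continuous_snd).continuousAt.comp (hGinv.prodMk hb)
  have hc₀ : c x₀ = 0 := by
    simp only [c, show b x₀ = 0 from funext hd, mulVec_zero]
  refine ⟨fun x => d - ∑ i, c x i • w x i, ?_, ?_⟩
  · have hcorr : Tendsto (fun x => ∑ i, c x i • w x i) (𝓝 x₀) (𝓝 0) := by
      simpa [hc₀] using tendsto_finsetSum _ fun i _ =>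
        ((continuous_apply i).continuousAt.comp hc).smul (hwi i)
    simpa using tendsto_const_nhds.sub hcorr
  · filter_upwards [hG.eventually ((continuous_id.matrix_det.continuousAt).eventually_ne hdet)]
      with x (hx : (G x).det ≠ 0) i
    have hGc : G x *ᵥ c x = b x := by
      rw [mulVec_mulVec, mul_nonsing_inv _ (isUnit_iff_ne_zero.mpr hx), one_mulVec]
    rw [inner_sub_right, ← gram_mulVec_apply, hGc, sub_self]

end OrthogonalComplementOfSpan

section ConstantRank

universe u

variable {X E : Type*} {ι : Type u} [TopologicalSpace X] [NormedAddCommGroup E]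
  [InnerProductSpace ℝ E] [FiniteDimensional ℝ E] {v : X → ι → E} {x₀ : X}

lemma exists_comp_span_eq_eventually_linearIndependent (hv : ContinuousAt v x₀) :
    ∃ (κ : Type u) (_ : Fintype κ) (a : κ → ι),
      Submodule.span ℝ (range (v x₀ ∘ a)) = Submodule.span ℝ (range (v x₀)) ∧
      ∀ᶠ x in 𝓝 x₀, LinearIndependent ℝ (v x ∘ a) := by
  obtain ⟨κ, a, -, hspan, hind⟩ := exists_linearIndependent' ℝ (v x₀)
  have : Finite κ := hind.finite
  have hva : ContinuousAt (fun x => v x ∘ a) x₀ :=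
    (continuous_pi fun j => continuous_apply (a j)).continuousAt.comp hv
  exact ⟨κ, Fintype.ofFinite κ, a, hspan, hva.eventually hind.eventually⟩

lemma eventually_finrank_span_le (hv : ContinuousAt v x₀) :
    ∀ᶠ x in 𝓝 x₀, Module.finrank ℝ (Submodule.span ℝ (range (v x₀))) ≤
      Module.finrank ℝ (Submodule.span ℝ (range (v x))) := by
  obtain ⟨κ, _, a, hspan, hind⟩ := exists_comp_span_eq_eventually_linearIndependent hv
  filter_upwards [hind] with x hx
  calc Module.finrank ℝ (Submodule.span ℝ (range (v x₀)))
      = Module.finrank ℝ (Submodule.span ℝ (range (v x ∘ a))) := by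
        rw [← hspan, finrank_span_eq_card hind.self_of_nhds, finrank_span_eq_card hx]
    _ ≤ _ := Submodule.finrank_mono (Submodule.span_mono (range_comp_subset_range _ _))

lemma seqInnerSemicontinuousAt_orthogonal_span (hv : ContinuousAt v x₀)
    (hrank : ∀ᶠ x in 𝓝 x₀, Module.finrank ℝ (Submodule.span ℝ (range (v x))) =
      Module.finrank ℝ (Submodule.span ℝ (range (v x₀)))) :
    SeqInnerSemicontinuousAt (fun x => ((Submodule.span ℝ (range (v x)))ᗮ : Set E)) x₀ := by
  obtain ⟨κ, _, a, hspan, hind⟩ := exists_comp_span_eq_eventually_linearIndependent hv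
  refine seqInnerSemicontinuousAt_of_exists_tendsto fun d hd => ?_
  rw [← hspan, mem_orthogonal_span_range_iff] at hd
  obtain ⟨D, hD, hDa⟩ := exists_tendsto_forall_inner_eq_zero
    ((continuous_pi fun j => continuous_apply (a j)).continuousAt.comp hv) hind.self_of_nhds hd
  refine ⟨D, hD, ?_⟩
  filter_upwards [hind, hrank, hDa] with x hx hrx hDx
  have hspan_x : Submodule.span ℝ (range (v x ∘ a)) = Submodule.span ℝ (range (v x)) := by
    refine Submodule.eq_of_le_of_finrank_le
      (Submodule.span_mono (range_comp_subset_range _ _)) ?_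
    rw [hrx, ← hspan, finrank_span_eq_card hind.self_of_nhds, finrank_span_eq_card hx]
  rw [← hspan_x, mem_orthogonal_span_range_iff]
  exact hDx

theorem exists_nhds_finrank_span_eq_iff_seqInnerSemicontinuousAt [FirstCountableTopology X]
    (hv : ContinuousAt v x₀) :
    (∃ N ∈ 𝓝 x₀, ∃ c : ℕ, ∀ x ∈ N, Module.finrank ℝ (Submodule.span ℝ (range (v x))) = c) ↔
      SeqInnerSemicontinuousAt (fun x => ((Submodule.span ℝ (range (v x)))ᗮ : Set E)) x₀ := by
  constructor
  · rintro ⟨N, hN, c, hc⟩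
    refine seqInnerSemicontinuousAt_orthogonal_span hv ?_
    filter_upwards [hN] with x hx
    rw [hc x hx, hc x₀ (mem_of_mem_nhds hN)]
  · intro hisc
    refine ⟨_, (eventually_finrank_span_le hv).and hisc.eventually_finrank_le,
      Module.finrank ℝ (Submodule.span ℝ (range (v x₀))),
      fun x ⟨hle, hge⟩ => ?_⟩
    have h₀ := (Submodule.span ℝ (range (v x₀))).finrank_add_finrank_orthogonal
    have h := (Submodule.span ℝ (range (v x))).finrank_add_finrank_orthogonal
    omega

end ConstantRank

section MatrixCalculus

variable {n m p s : ℕ}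

lemma Matrix.IsSymm.eq_zero_iff_forall_le {κ α : Type*} [LinearOrder κ] [Zero α]
    {B : Matrix κ κ α} (hB : B.IsSymm) : B = 0 ↔ ∀ i j, i ≤ j → B i j = 0 := by
  refine ⟨fun h i j _ => by rw [h, zero_apply], fun h => Matrix.ext fun i j => ?_⟩
  rcases le_total i j with hij | hji
  · exact h i j hij
  · rw [← hB.apply i j]
    exact h j i hji

lemma isSymm_fderiv_apply {g : EuclideanSpace ℝ (Fin n) → Matrix (Fin m) (Fin m) ℝ}
    {x : EuclideanSpace ℝ (Fin n)} (hg : DifferentiableAt ℝ g x) (hgsym : ∀ y, (g y).IsSymm)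
    (d : EuclideanSpace ℝ (Fin n)) : (fderiv ℝ g x d).IsSymm := by
  let T := (transposeLinearEquiv (Fin m) (Fin m) ℝ ℝ).toLinearMap.toContinuousLinearMap
  have hTg : (fun y => T (g y)) = g := funext hgsym
  have hderiv := (T.hasFDerivAt.comp x hg.hasFDerivAt).fderiv
  rw [Function.comp_def, hTg] at hderiv
  exact (congrArg (fun L => L d) hderiv).symm

lemma inner_euclOf_dotProduct_mulVec
    (A : EuclideanSpace ℝ (Fin n) →L[ℝ] Matrix (Fin m) (Fin m) ℝ) (U : Matrix (Fin m) (Fin s) ℝ)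
    (i j : Fin s) (d : EuclideanSpace ℝ (Fin n)) :
    ⟪euclOf fun ℓ => (fun r => U r i) ⬝ᵥ A (EuclideanSpace.single ℓ 1) *ᵥ (fun r => U r j), d⟫_ℝ =
      (Uᵀ * A d * U) i j := by
  conv_rhs => rw [← (EuclideanSpace.basisFun (Fin n) ℝ).sum_repr d]
  simp only [map_sum, map_smul, Matrix.mul_smul, Matrix.smul_mul, Matrix.sum_mul, Matrix.mul_sum]
  simp only [euclOf, dotProduct, mulVec, PiLp.inner_apply, RCLike.inner_apply, map_sum,
    Real.ringHom_apply, EuclideanSpace.basisFun_repr, EuclideanSpace.basisFun_apply,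
    Matrix.sum_apply, Matrix.smul_apply, Matrix.mul_apply, transpose_apply, smul_eq_mul]
  refine Finset.sum_congr rfl fun ℓ _ => congrArg _ ?_
  simp only [Finset.mul_sum, Finset.sum_mul, mul_assoc]
  exact Finset.sum_comm

lemma inner_gradient_apply {h : EuclideanSpace ℝ (Fin n) → EuclideanSpace ℝ (Fin p)}
    {x : EuclideanSpace ℝ (Fin n)} (hh : DifferentiableAt ℝ h x) (i : Fin p)
    (d : EuclideanSpace ℝ (Fin n)) :
    ⟪gradient (fun y => h y i) x, d⟫_ℝ = fderiv ℝ h x d i := by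
  have hcomp := (PiLp.hasFDerivAt_apply 2 (h x) i).comp x hh.hasFDerivAt
  rw [Function.comp_def] at hcomp
  rw [inner_gradient_left, hcomp.fderiv]
  rfl

end MatrixCalculus

section ReducedGradients

variable {n p m s : ℕ}

/-- The vectors `v̄ᵢⱼ(x)` (`i ≤ j`) and `∇hᵢ(x)` of the weak constant rank property. -/
noncomputable def reducedGradients (g : EuclideanSpace ℝ (Fin n) → Matrix (Fin m) (Fin m) ℝ)
    (h : EuclideanSpace ℝ (Fin n) → EuclideanSpace ℝ (Fin p))
    (𝒰 : Matrix (Fin m) (Fin m) ℝ → Matrix (Fin m) (Fin s) ℝ) (x : EuclideanSpace ℝ (Fin n)) :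
    {q : Fin s × Fin s // q.1 ≤ q.2} ⊕ Fin p → EuclideanSpace ℝ (Fin n) :=
  Sum.elim
    (fun q => euclOf fun ℓ =>
      (fun i => 𝒰 (g x) i q.1.1 : Fin m → ℝ) ⬝ᵥ
        (fderiv ℝ g x (EuclideanSpace.single ℓ 1)).mulVec (fun i => 𝒰 (g x) i q.1.2))
    (fun i => gradient (fun y => h y i) x)

variable {g : EuclideanSpace ℝ (Fin n) → Matrix (Fin m) (Fin m) ℝ}
  {h : EuclideanSpace ℝ (Fin n) → EuclideanSpace ℝ (Fin p)}
  {𝒰 : Matrix (Fin m) (Fin m) ℝ → Matrix (Fin m) (Fin s) ℝ}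

lemma ssdp_eq_orthogonal_span_reducedGradients {x : EuclideanSpace ℝ (Fin n)}
    (hg : DifferentiableAt ℝ g x) (hh : DifferentiableAt ℝ h x) (hgsym : ∀ y, (g y).IsSymm) :
    Ssdp g h 𝒰 x = (Submodule.span ℝ (range (reducedGradients g h 𝒰 x)))ᗮ := by
  ext d
  have hsym : ((𝒰 (g x))ᵀ * fderiv ℝ g x d * 𝒰 (g x)).IsSymm := by
    rw [IsSymm, transpose_mul, transpose_mul, transpose_transpose,
      (isSymm_fderiv_apply hg hgsym d).eq, Matrix.mul_assoc]
  rw [SetLike.mem_coe, mem_orthogonal_span_range_iff, Sum.forall, Ssdp, mem_ofPred_eq,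
    hsym.eq_zero_iff_forall_le]
  simp only [reducedGradients, Sum.elim_inl, Sum.elim_inr, inner_euclOf_dotProduct_mulVec,
    inner_gradient_apply hh, Subtype.forall, Prod.forall]
  exact and_congr_right' PiLp.ext_iff

lemma continuousAt_reducedGradients {x₀ : EuclideanSpace ℝ (Fin n)} (hg : ContDiff ℝ 1 g)
    (hh : ContDiff ℝ 1 h) (hU : ContinuousAt (fun x => 𝒰 (g x)) x₀) :
    ContinuousAt (reducedGradients g h 𝒰) x₀ := by
  refine continuousAt_pi.mpr fun q => ?_
  rcases q with q | i
  · refine (PiLp.continuous_toLp 2 _).continuousAt.comp (continuousAt_pi.mpr fun ℓ => ?_)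
    have hA : Continuous fun x => fderiv ℝ g x (EuclideanSpace.single ℓ 1) :=
      (hg.continuous_fderiv one_ne_zero).clm_apply continuous_const
    have hform : Continuous fun UA : Matrix (Fin m) (Fin s) ℝ × Matrix (Fin m) (Fin m) ℝ =>
        (fun r => UA.1 r q.1.1) ⬝ᵥ UA.2 *ᵥ (fun r => UA.1 r q.1.2) := by
      fun_prop
    exact hform.continuousAt.comp (hU.prodMk hA.continuousAt)
  · have hhi : ContDiff ℝ 1 fun y => h y i := (contDiff_piLp 2).mp hh i
    exact ((InnerProductSpace.toDual ℝ _).symm.continuous.comp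
      (hhi.continuous_fderiv one_ne_zero)).continuousAt

end ReducedGradients

theorem stmt_13_general {n p m s : ℕ}
    (g : EuclideanSpace ℝ (Fin n) → Matrix (Fin m) (Fin m) ℝ)
    (h : EuclideanSpace ℝ (Fin n) → EuclideanSpace ℝ (Fin p))
    (hg : ContDiff ℝ 2 g) (hh : ContDiff ℝ 2 h)
    (hgsym : ∀ x, (g x).IsSymm)
    (xs : EuclideanSpace ℝ (Fin n))
    -- `𝒰` is a continuous frame map on a neighborhood `NM` of `g(x*)`:
    (NM : Set (Matrix (Fin m) (Fin m) ℝ)) (hNM : NM ∈ 𝓝 (g xs))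
    (𝒰 : Matrix (Fin m) (Fin m) ℝ → Matrix (Fin m) (Fin s) ℝ)
    (hUcont : ContinuousOn 𝒰 NM) :
    -- WCR at `xs`:
    ((∃ N ∈ 𝓝 xs, ∃ c : ℕ, ∀ x ∈ N,
      Module.finrank ℝ (Submodule.span ℝ (Set.range
        (Sum.elim
          (fun q : {q : Fin s × Fin s // q.1 ≤ q.2} =>
            euclOf fun ℓ =>
              (fun i => 𝒰 (g x) i q.1.1 : Fin m → ℝ) ⬝ᵥ
                (fderiv ℝ g x (EuclideanSpace.single ℓ 1)).mulVec
                  (fun i => 𝒰 (g x) i q.1.2))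
          (fun i : Fin p => gradient (fun y => h y i) x)))) = c)
    ↔
    -- inner semicontinuity of `x ↦ S(x, x*)` at `xs`:
    (∀ d ∈ Ssdp g h 𝒰 xs, ∀ xk : ℕ → EuclideanSpace ℝ (Fin n),
      Tendsto xk atTop (𝓝 xs) →
        ∃ dk : ℕ → EuclideanSpace ℝ (Fin n),
          Tendsto dk atTop (𝓝 d) ∧ ∀ k, dk k ∈ Ssdp g h 𝒰 (xk k))) := by
  have hS : Ssdp g h 𝒰 = fun x =>
      ((Submodule.span ℝ (range (reducedGradients g h 𝒰 x)))ᗮ : Set _) :=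
    funext fun x => ssdp_eq_orthogonal_span_reducedGradients
      ((hg.differentiable two_ne_zero).differentiableAt)
      ((hh.differentiable two_ne_zero).differentiableAt) hgsym
  have hcont : ContinuousAt (reducedGradients g h 𝒰) xs :=
    continuousAt_reducedGradients (hg.of_le one_le_two) (hh.of_le one_le_two)
      ((hUcont.continuousAt hNM).comp hg.continuous.continuousAt)
  rw [hS]
  exact exists_nhds_finrank_span_eq_iff_seqInnerSemicontinuousAt hcont

theorem stmt_13 {n p m s : ℕ}
    (f : EuclideanSpace ℝ (Fin n) → ℝ)
    (g : EuclideanSpace ℝ (Fin n) → Matrix (Fin m) (Fin m) ℝ)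
    (h : EuclideanSpace ℝ (Fin n) → EuclideanSpace ℝ (Fin p))
    (hf : ContDiff ℝ 2 f) (hg : ContDiff ℝ 2 g) (hh : ContDiff ℝ 2 h)
    (hgsym : ∀ x, (g x).IsSymm)
    (xs : EuclideanSpace ℝ (Fin n))
    -- `xs` is feasible for (NSDP):
    (hfeas : (g xs).PosSemidef ∧ h xs = 0)
    (hs : s = Module.finrank ℝ (LinearMap.ker (g xs).mulVecLin))
    -- `𝒰` is a continuous frame map on a neighborhood `NM` of `g(x*)`:
    (NM : Set (Matrix (Fin m) (Fin m) ℝ)) (hNM : NM ∈ 𝓝 (g xs))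
    (𝒰 : Matrix (Fin m) (Fin m) ℝ → Matrix (Fin m) (Fin s) ℝ)
    (hUcont : ContinuousOn 𝒰 NM)
    -- the columns of `𝒰(g(x*))` form an orthonormal basis of `Ker g(x*)`:
    (hUorth0 : (𝒰 (g xs))ᵀ * 𝒰 (g xs) = 1)
    (hUspan0 : Submodule.span ℝ (Set.range fun j : Fin s => (fun i => 𝒰 (g xs) i j : Fin m → ℝ))
      = LinearMap.ker (g xs).mulVecLin)
    -- for every `M` in the neighborhood, the columns of `𝒰 M` are orthonormal
    -- and span the invariant subspace of `M` associated with its `s` smallest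
    -- eigenvalues:
    (hUframe : ∀ M ∈ NM, M.IsSymm →
      (𝒰 M)ᵀ * 𝒰 M = 1 ∧
      (∀ v ∈ Submodule.span ℝ (Set.range fun j : Fin s => (fun i => 𝒰 M i j : Fin m → ℝ)),
        M.mulVec v ∈
          Submodule.span ℝ (Set.range fun j : Fin s => (fun i => 𝒰 M i j : Fin m → ℝ))) ∧
      (∀ v ∈ Submodule.span ℝ (Set.range fun j : Fin s => (fun i => 𝒰 M i j : Fin m → ℝ)),
        ∀ a : ℝ, v ≠ 0 → M.mulVec v = a • v →
          ∀ w : Fin m → ℝ, ∀ b : ℝ,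
            (∀ u' ∈ Submodule.span ℝ
                (Set.range fun j : Fin s => (fun i => 𝒰 M i j : Fin m → ℝ)), w ⬝ᵥ u' = 0) →
            w ≠ 0 → M.mulVec w = b • w → a ≤ b)) :
    -- WCR at `xs`:
    ((∃ N ∈ 𝓝 xs, ∃ c : ℕ, ∀ x ∈ N,
      Module.finrank ℝ (Submodule.span ℝ (Set.range
        (Sum.elim
          (fun q : {q : Fin s × Fin s // q.1 ≤ q.2} =>
            euclOf fun ℓ =>
              (fun i => 𝒰 (g x) i q.1.1 : Fin m → ℝ) ⬝ᵥ
                (fderiv ℝ g x (EuclideanSpace.single ℓ 1)).mulVec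
                  (fun i => 𝒰 (g x) i q.1.2))
          (fun i : Fin p => gradient (fun y => h y i) x)))) = c)
    ↔
    -- inner semicontinuity of `x ↦ S(x, x*)` at `xs`:
    (∀ d ∈ Ssdp g h 𝒰 xs, ∀ xk : ℕ → EuclideanSpace ℝ (Fin n),
      Tendsto xk atTop (𝓝 xs) →
        ∃ dk : ℕ → EuclideanSpace ℝ (Fin n),
          Tendsto dk atTop (𝓝 d) ∧ ∀ k, dk k ∈ Ssdp g h 𝒰 (xk k))) :=
  stmt_13_general g h hg hh hgsym xs NM hNM 𝒰 hUcont
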